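/- arXiv:1011.6552 — 6 statements merged into one kernel-verified Lean document; each statement's English description precedes it below -/
import Mathlib

section
/- The bifurcation set B is symmetric with respect to the vertical axis: if (a, b) ∈ B then (−a, b) ∈ B. -/
noncomputable def psi : ℝ × ℝ → ℝ × ℝ := fun p => (p.1, p.1 * Real.sin p.2)

noncomputable def B : Set (ℝ × ℝ) := ⋂ n : ℕ, psi^[n] '' Set.univ

lemma psi_iter_neg_snd (n : ℕ) : ∀ x y : ℝ,
    psi^[n] (x, -y) = ((psi^[n] (x, y)).1, -(psi^[n] (x, y)).2) := by
  induction n with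
  | zero => intro x y; simp
  | succ n ih =>
    intro x y
    rw [Function.iterate_succ_apply, Function.iterate_succ_apply]
    have h1 : psi (x, -y) = (x, -(x * Real.sin y)) := by
      simp [psi, Real.sin_neg]
    have h2 : psi (x, y) = (x, x * Real.sin y) := rfl
    rw [h1, h2, ih]

lemma psi_iter_neg (n : ℕ) : ∀ x y : ℝ,
    psi^[n] (-x, -y) = (-(psi^[n] (x, y)).1, (-1 : ℝ) ^ (n + 1) * (psi^[n] (x, y)).2) := by
  induction n with
  | zero => intro x y; simp
  | succ n ih =>
    intro x y
    rw [Function.iterate_succ_apply, Function.iterate_succ_apply]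
    have h1 : psi (-x, -y) = (-x, -(-(x * Real.sin y))) := by
      simp [psi, Real.sin_neg]
    have h2 : psi (x, y) = (x, x * Real.sin y) := rfl
    rw [h1, h2, ih x (-(x * Real.sin y)), psi_iter_neg_snd]
    simp
    ring

theorem B_symm_vertical (a b : ℝ) (h : (a, b) ∈ B) : (-a, b) ∈ B := by
  simp only [B, Set.mem_iInter, Set.image_univ, Set.mem_range] at h ⊢
  intro n
  obtain ⟨p, hp⟩ := h n
  rcases Nat.even_or_odd n with he | ho
  · refine ⟨(-p.1, p.2), ?_⟩
    have : p.2 = -(-p.2) := by ring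
    rw [show ((-p.1, p.2) : ℝ × ℝ) = (-p.1, -(-p.2)) by rw [← this],
      psi_iter_neg n p.1 (-p.2), psi_iter_neg_snd]
    have hodd : Odd (n + 1) := Even.add_one he
    rw [show (p.1, p.2) = p from rfl, hp]
    simp [hodd.neg_one_pow]
  · refine ⟨(-p.1, -p.2), ?_⟩
    rw [psi_iter_neg n p.1 p.2, show (p.1, p.2) = p from rfl, hp]
    have heven : Even (n + 1) := Odd.add_one ho
    simp [heven.neg_one_pow]
end

section
/- Mixed-sign intersection case: let a ∈ ℝ and let n < m be natural numbers with p = m − n. If ψⁿ(a, a) = ψᵐ(a, −a), then the point w = ψⁿ(a, a) is periodic with period 2p, i.e. ψ²ᵖ(w) = w. -/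
theorem Function.Commute.iterate_two_mul_apply_eq_self {α : Type*} {f σ : α → α}
    (hfσ : Function.Commute f σ) (hσ : Function.Involutive σ) {w : α} {p : ℕ}
    (hw : f^[p] (σ w) = w) :
    f^[2 * p] w = w := by
  have hσw : f^[p] w = σ w := by
    calc f^[p] w = f^[p] (σ (σ w)) := by rw [hσ w]
      _ = σ (f^[p] (σ w)) := (hfσ.iterate_left p).eq (σ w)
      _ = σ w := by rw [hw]
  rw [two_mul, Function.iterate_add_apply, hσw, hw]

theorem psi_commute_neg_snd : Function.Commute psi (Prod.map id Neg.neg) := by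
  rintro ⟨x, y⟩
  simp [psi, Real.sin_neg]

theorem mixed_sign_periodic (a : ℝ) (n m : ℕ) (hnm : n < m)
    (h : psi^[n] (a, a) = psi^[m] (a, -a)) :
    psi^[2 * (m - n)] (psi^[n] (a, a)) = psi^[n] (a, a) := by
  obtain ⟨p, rfl⟩ := Nat.exists_eq_add_of_le hnm.le
  have hσ : Function.Involutive (Prod.map id Neg.neg : ℝ × ℝ → ℝ × ℝ) :=
    Function.Involutive.prodMap (fun _ => rfl) neg_involutive
  rw [Nat.add_sub_cancel_left]
  refine psi_commute_neg_snd.iterate_two_mul_apply_eq_self hσ ?_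
  calc psi^[p] (Prod.map id Neg.neg (psi^[n] (a, a)))
      = psi^[p] (psi^[n] (a, -a)) := by rw [← (psi_commute_neg_snd.iterate_left n).eq]; rfl
    _ = psi^[n] (a, a) := by rw [h, add_comm, Function.iterate_add_apply]
end

section
/- Main theorem (patterns intersect on the bifurcation diagram): for all natural numbers n ≠ m, the intersection C⁽ⁿ⁾ ∩ C⁽ᵐ⁾ is contained in the bifurcation set B. -/
noncomputable def C (n : ℕ) : Set (ℝ × ℝ) :=
  {p | ∃ x : ℝ, p = psi^[n] (x, x)} ∪ {p | ∃ x : ℝ, p = psi^[n] (-x, x)}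

noncomputable def f (a : ℝ) : ℝ → ℝ := fun y => a * Real.sin y

lemma f_iter_neg (a : ℝ) (k : ℕ) (y : ℝ) : (f a)^[k] (-y) = -((f a)^[k] y) := by
  induction k generalizing y with
  | zero => simp
  | succ k ih =>
    rw [Function.iterate_succ_apply, Function.iterate_succ_apply]
    have : f a (-y) = -(f a y) := by simp [f]
    rw [this, ih]

lemma psi_iter (k : ℕ) (a b : ℝ) : psi^[k] (a, b) = (a, (f a)^[k] b) := by
  induction k generalizing b with
  | zero => simp
  | succ k ih =>
    rw [Function.iterate_succ_apply, Function.iterate_succ_apply]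
    have : psi (a, b) = (a, f a b) := rfl
    rw [this, ih]

lemma periodic_mem_B (p : ℝ × ℝ) (d : ℕ) (hd : 0 < d)
    (hfix : (f p.1)^[d] p.2 = p.2) : p ∈ B := by
  simp only [B, Set.mem_iInter]
  intro k
  refine ⟨(p.1, (f p.1)^[d * k - k] p.2), Set.mem_univ _, ?_⟩
  rw [psi_iter, ← Function.iterate_add_apply,
    Nat.add_sub_cancel' (Nat.le_mul_of_pos_left k hd), Function.iterate_mul,
    Function.iterate_fixed hfix]

lemma C_char (n : ℕ) (p : ℝ × ℝ) (hp : p ∈ C n) :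
    (f p.1)^[n] p.1 = p.2 ∨ (f p.1)^[n] p.1 = -p.2 := by
  rcases hp with ⟨x, hx⟩ | ⟨x, hx⟩
  · rw [psi_iter] at hx
    left; rw [hx]
  · rw [psi_iter] at hx
    right
    rw [hx]
    show (f (-x))^[n] (-x) = -((f (-x))^[n] x)
    rw [f_iter_neg]

lemma key (n m : ℕ) (h : n < m) : C n ∩ C m ⊆ B := by
  intro p ⟨hpn, hpm⟩
  have h1 := C_char n p hpn
  have h2 := C_char m p hpm
  set a := p.1
  have hsplit : (f a)^[m] a = (f a)^[m - n] ((f a)^[n] a) := by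
    rw [← Function.iterate_add_apply, Nat.sub_add_cancel h.le]
  set e := m - n with he
  have he0 : 0 < e := Nat.sub_pos_of_lt h
  have hcase : (f a)^[e] p.2 = p.2 ∨ (f a)^[e] p.2 = -p.2 := by
    rcases h1 with h1 | h1 <;> rcases h2 with h2 | h2 <;>
      rw [hsplit, h1] at h2
    · exact Or.inl h2
    · exact Or.inr h2
    · right; rw [f_iter_neg] at h2; linarith
    · left; rw [f_iter_neg] at h2; linarith
  have hfix : (f a)^[e + e] p.2 = p.2 := by
    rw [Function.iterate_add_apply]
    rcases hcase with hc | hc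
    · rw [hc, hc]
    · rw [hc, f_iter_neg, hc]; ring
  exact periodic_mem_B p (e + e) (by omega) hfix

theorem patterns_intersect_in_B (n m : ℕ) (h : n ≠ m) : C n ∩ C m ⊆ B := by
  rcases h.lt_or_gt with hlt | hlt
  · exact key n m hlt
  · rw [Set.inter_comm]
    exact key m n hlt
end

section
/- The limit of the pattern curves lies in the bifurcation diagram: the limsup of the sets C⁽ⁿ⁾, namely ⋂_{N∈ℕ} ⋃_{m ≥ N} C⁽ᵐ⁾, is contained in the bifurcation set B. -/
theorem patterns_limsup_subset_B :
    (⋂ N : ℕ, ⋃ m : ℕ, ⋃ _ : N ≤ m, C m) ⊆ B := by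
  intro p hp
  rw [Set.mem_iInter] at hp
  rw [B, Set.mem_iInter]
  intro n
  obtain ⟨m, hnm, hpm⟩ : ∃ m, n ≤ m ∧ p ∈ C m := by
    have := hp n
    simp only [Set.mem_iUnion] at this
    obtain ⟨m, hm, h⟩ := this
    exact ⟨m, hm, h⟩
  have hq : ∃ q : ℝ × ℝ, p = psi^[m] q := by
    rcases hpm with ⟨x, hx⟩ | ⟨x, hx⟩
    · exact ⟨(x, x), hx⟩
    · exact ⟨(-x, x), hx⟩
  obtain ⟨q, hq⟩ := hq
  refine ⟨psi^[m - n] q, Set.mem_univ _, ?_⟩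
  rw [hq, ← Function.iterate_add_apply, Nat.add_sub_cancel' hnm]
end

section
/- Generalized mixed-sign intersection case: let f : ℝ → ℝ be an odd function (f(−y) = −f(y) for all y), let a ∈ ℝ and let n < m be natural numbers with p = m − n. If θⁿ(a, a) = θᵐ(a, −a), then the point w = θⁿ(a, a) satisfies θ²ᵖ(w) = w. -/
def theta (f : ℝ → ℝ) : ℝ × ℝ → ℝ × ℝ := fun p => (p.1, p.1 * f p.2)

theorem gen_mixed_sign_periodic (f : ℝ → ℝ) (hf : ∀ y : ℝ, f (-y) = -f y)
    (a : ℝ) (n m : ℕ) (hnm : n < m)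
    (h : (theta f)^[n] (a, a) = (theta f)^[m] (a, -a)) :
    (theta f)^[2 * (m - n)] ((theta f)^[n] (a, a)) = (theta f)^[n] (a, a) := by
  set N : ℝ × ℝ → ℝ × ℝ := fun q => (q.1, -q.2) with hN
  have hcomm : ∀ q, theta f (N q) = N (theta f q) := by
    intro q
    simp [theta, hN, hf]
  have hiter : ∀ k q, (theta f)^[k] (N q) = N ((theta f)^[k] q) := by
    intro k
    induction k with
    | zero => intro q; simp
    | succ k ih =>
      intro q
      rw [Function.iterate_succ_apply, hcomm, ih, Function.iterate_succ_apply]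
  set w := (theta f)^[n] (a, a) with hw
  have hmn : n + (m - n) = m := Nat.add_sub_cancel' hnm.le
  have hpw : (theta f)^[m - n] w = N w := by
    have h1 : (theta f)^[m - n] w = (theta f)^[m] (a, a) := by
      rw [hw, ← Function.iterate_add_apply, Nat.add_comm, hmn]
    have h2 : (a, -a) = N (a, a) := by simp [hN]
    rw [h1, h, h2, hiter]
    simp [hN]
  have h2p : 2 * (m - n) = (m - n) + (m - n) := by ring
  rw [h2p, Function.iterate_add_apply, hpw, hiter, hpw]
  simp [hN]
end

section
/- Generalized main theorem: let f : ℝ → ℝ be an odd function (f(−y) = −f(y) for all y). Then for all natural numbers n ≠ m, the intersection D⁽ⁿ⁾ ∩ D⁽ᵐ⁾ is contained in the invariant set D. -/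
def D (f : ℝ → ℝ) : Set (ℝ × ℝ) := ⋂ n : ℕ, (theta f)^[n] '' Set.univ

def Dn (f : ℝ → ℝ) (n : ℕ) : Set (ℝ × ℝ) :=
  {p | ∃ x : ℝ, p = (theta f)^[n] (x, x)} ∪ {p | ∃ x : ℝ, p = (theta f)^[n] (-x, x)}

lemma theta_iter (f : ℝ → ℝ) (c : ℝ) :
    ∀ (k : ℕ) (y : ℝ), (theta f)^[k] (c, y) = (c, (fun t => c * f t)^[k] y) := by
  intro k
  induction k with
  | zero => intro y; simp
  | succ k ih =>
    intro y
    rw [Function.iterate_succ_apply, Function.iterate_succ_apply]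
    exact ih (c * f y)

lemma iter_odd {g : ℝ → ℝ} (hg : ∀ y, g (-y) = - g y) :
    ∀ (k : ℕ) (y : ℝ), g^[k] (-y) = - g^[k] y := by
  intro k
  induction k with
  | zero => intro y; simp
  | succ k ih =>
    intro y
    rw [Function.iterate_succ_apply, Function.iterate_succ_apply, hg, ih]

lemma mem_Dn (f : ℝ → ℝ) (n : ℕ) (p : ℝ × ℝ) (hp : p ∈ Dn f n) :
    ∃ t : ℝ, (t = p.1 ∨ t = -p.1) ∧ p = (p.1, (fun y => p.1 * f y)^[n] t) := by
  rcases hp with ⟨x, hx⟩ | ⟨x, hx⟩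
  · rw [theta_iter] at hx
    exact ⟨x, Or.inl (by rw [hx]), by rw [hx]⟩
  · rw [theta_iter] at hx
    exact ⟨x, Or.inr (by rw [hx]; simp), by rw [hx]⟩

lemma key_s17 (f : ℝ → ℝ) (hf : ∀ y : ℝ, f (-y) = -f y)
    {n m : ℕ} (hnm : n < m) {p : ℝ × ℝ} (hn : p ∈ Dn f n) (hm : p ∈ Dn f m) :
    p ∈ D f := by
  obtain ⟨t1, ht1, hp1⟩ := mem_Dn f n p hn
  obtain ⟨t2, ht2, hp2⟩ := mem_Dn f m p hm
  set c := p.1 with hc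
  set g : ℝ → ℝ := fun y => c * f y with hg
  have hgodd : ∀ y, g (-y) = - g y := by
    intro y; simp [hg, hf y, mul_neg]
  have hs1 : p.2 = g^[n] t1 := by rw [hp1]
  have hs2 : p.2 = g^[m] t2 := by rw [hp2]
  set s := p.2 with hsdef
  set d := m - n with hd
  have hdm : d + n = m := Nat.sub_add_cancel hnm.le
  have hdpos : 0 < d := Nat.sub_pos_of_lt hnm
  have hsplit : g^[m] t2 = g^[d] (g^[n] t2) := by
    rw [← hdm, Function.iterate_add_apply]
  -- either t1 = t2 or t1 = -t2
  have hcases : t1 = t2 ∨ t1 = -t2 := by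
    rcases ht1 with h1 | h1 <;> rcases ht2 with h2 | h2
    · exact Or.inl (h1.trans h2.symm)
    · exact Or.inr (by rw [h1, h2, neg_neg])
    · exact Or.inr (by rw [h1, h2])
    · exact Or.inl (h1.trans h2.symm)
  -- find a positive period e with g^[e] s = s
  have hper : ∃ e : ℕ, 0 < e ∧ g^[e] s = s := by
    rcases hcases with h | h
    · refine ⟨d, hdpos, ?_⟩
      have : g^[n] t2 = s := by rw [← h, ← hs1]
      rw [this] at hsplit
      rw [← hsplit, ← hs2]
    · refine ⟨2 * d, by omega, ?_⟩
      have hnt : g^[n] t2 = -s := by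
        have : s = g^[n] (-t2) := by rw [← h, ← hs1]
        rw [iter_odd hgodd] at this
        linarith
      have hds : g^[d] (-s) = s := by rw [← hnt, ← hsplit, ← hs2]
      have hds' : g^[d] s = -s := by
        have := iter_odd hgodd d (-s)
        rw [hds, neg_neg] at this
        linarith
      rw [two_mul, Function.iterate_add_apply, hds', hds]
  obtain ⟨e, hepos, hfix⟩ := hper
  -- show p ∈ D f
  have hpcs : p = (c, s) := rfl
  simp only [D, Set.mem_iInter]
  intro k
  refine ⟨(c, g^[k * e - k] s), Set.mem_univ _, ?_⟩
  rw [theta_iter]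
  have hke : k ≤ k * e := Nat.le_mul_of_pos_right k hepos
  have : g^[k] (g^[k * e - k] s) = s := by
    rw [← Function.iterate_add_apply]
    have hsum : k + (k * e - k) = k * e := by omega
    rw [hsum, mul_comm k e, Function.iterate_mul]
    exact Function.iterate_fixed hfix k
  rw [this]

theorem gen_patterns_intersect_in_D (f : ℝ → ℝ) (hf : ∀ y : ℝ, f (-y) = -f y)
    (n m : ℕ) (h : n ≠ m) : Dn f n ∩ Dn f m ⊆ D f := by
  intro p ⟨hn, hm⟩
  rcases lt_or_gt_of_ne h with hlt | hlt
  · exact key_s17 f hf hlt hn hm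
  · exact key_s17 f hf hlt hm hn
end
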